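/- arXiv:1810.12058 — 7 statements merged into one kernel-verified Lean document; each statement's English description precedes it below -/
import Mathlib

section
/- Let 0<p<q, p+q=1. Define π_0 = (q−p)/q and π_j = ((q−p)/(pq))·(p²/q²)^j for j≥1. Then Σ_{j≥0} π_j = 1 and the balance equations hold: π_j = p²·π_{j−1} + 2pq·π_j + q²·π_{j+1} for j≥2, π_1 = p·π_0 + 2pq·π_1 + q²·π_2, and π_0 = q·π_0 + q²·π_1. -/
/-! Since `p + q = 1`, the ratio `r = p² / q²` satisfies
`r = r (p + q)² = p² + 2pq r + q² r²`, so every geometric sequence with ratio `r` balances the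
interior equations. Given `π₂ = r π₁`, both boundary equations reduce to the flux relation
`q² π₁ = p π₀`. The tail sums to `π₁ / (1 - r) = 1 - π₀` because
`q² (1 - r) = q² - p² = q - p = q π₀`. -/

theorem tsum_eq_add_div_one_sub_of_geometric_tail {π : ℕ → ℝ} {a r : ℝ} (hr0 : 0 ≤ r)
    (hr1 : r < 1) (htail : ∀ j, π (j + 1) = a * r ^ j) :
    ∑' j, π j = π 0 + a / (1 - r) := by
  have htail' : (fun j ↦ π (j + 1)) = fun j ↦ a * r ^ j := funext htail
  have hsum : Summable π := by
    rw [← summable_nat_add_iff 1, htail']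
    exact (summable_geometric_of_lt_one hr0 hr1).mul_left a
  rw [hsum.tsum_eq_zero_add, htail', tsum_mul_left, tsum_geometric_of_lt_one hr0 hr1,
    div_eq_mul_inv]

theorem eq_add_mul_add_mul_sq_of_sq_mul_eq {p q r : ℝ} (hsum : p + q = 1)
    (hqr : q ^ 2 * r = p ^ 2) : r = p ^ 2 + 2 * p * q * r + q ^ 2 * r ^ 2 := by
  linear_combination (-r * (p + q + 1)) * hsum + (1 - r) * hqr

/-- Stationary distribution of the subwalk at odd times (`VU`) for the
traffic light queue with `ℓ = 1`. -/
theorem stmt_2 (p q : ℝ) (hp : 0 < p) (hpq : p < q) (hsum : p + q = 1)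
    (π : ℕ → ℝ) (hπ0 : π 0 = (q - p) / q)
    (hπ : ∀ j : ℕ, 1 ≤ j → π j = ((q - p) / (p * q)) * (p ^ 2 / q ^ 2) ^ j) :
    (∑' j : ℕ, π j) = 1 ∧
    (∀ j : ℕ, 2 ≤ j →
      π j = p ^ 2 * π (j - 1) + 2 * p * q * π j + q ^ 2 * π (j + 1)) ∧
    π 1 = p * π 0 + 2 * p * q * π 1 + q ^ 2 * π 2 ∧
    π 0 = q * π 0 + q ^ 2 * π 1 := by
  have hq : 0 < q := hp.trans hpq
  obtain ⟨r, hr⟩ : ∃ r, r = p ^ 2 / q ^ 2 := ⟨_, rfl⟩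
  have hr0 : 0 ≤ r := by rw [hr]; positivity
  have hr1 : r < 1 :=
    hr ▸ (div_lt_one (by positivity)).mpr (pow_lt_pow_left₀ hpq hp.le two_ne_zero)
  have hqr : q ^ 2 * r = p ^ 2 := by rw [hr]; field_simp
  have htail (j : ℕ) : π (j + 1) = π 1 * r ^ j := by
    rw [hπ (j + 1) j.succ_pos, hπ 1 le_rfl, ← hr]
    ring
  have hflux : q ^ 2 * π 1 = p * π 0 := by
    rw [hπ 1 le_rfl, hπ0]
    field_simp
  have hπ0' : q * π 0 = q - p := by
    rw [hπ0]
    field_simp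
  have hmass : π 1 = (1 - π 0) * (1 - r) := mul_left_cancel₀ (pow_ne_zero 2 hq.ne') <| by
    linear_combination hflux + (1 - π 0) * hqr - (1 - π 0) * (q - p) * hsum + hπ0'
  refine ⟨?_, ?_, ?_, ?_⟩
  · rw [tsum_eq_add_div_one_sub_of_geometric_tail hr0 hr1 htail, hmass,
      mul_div_cancel_right₀ _ (sub_pos.mpr hr1).ne']
    ring
  · intro j hj
    obtain ⟨k, rfl⟩ := Nat.exists_eq_add_of_le' hj
    rw [show k + 2 - 1 = k + 1 by omega, htail k, htail (k + 1), htail (k + 2)]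
    linear_combination (π 1 * r ^ k) * eq_add_mul_add_mul_sq_of_sq_mul_eq hsum hqr
  · rw [htail 1]
    linear_combination hflux - π 1 * hqr - π 1 * (p + q + 1) * hsum
  · linear_combination -hflux - π 0 * hsum
end

section
/- Let 0<p<q, p+q=1, θ = √(1+4pq). The roots z₁ = (−1−2pq+θ)/(2p²) and z₃ = (−1−2pq−θ)/(2p²) of the quadratic p²z² + (1+2pq)z + q² = 0 satisfy |z₁| < 1 < |z₃|; moreover z₁ ∈ (−1,0) and z₃ < −1. -/
/-- The roots `z₁ = (−1−2pq+θ)/(2p²)` and `z₃ = (−1−2pq−θ)/(2p²)` of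
`p²z² + (1+2pq)z + q² = 0` satisfy `|z₁| < 1 < |z₃|`; moreover
`z₁ ∈ (−1, 0)` and `z₃ < −1`. -/
theorem stmt_6 (p q : ℝ) (hp : 0 < p) (hpq : p < q) (hsum : p + q = 1)
    (θ : ℝ) (hθ : θ = Real.sqrt (1 + 4 * p * q))
    (z₁ z₃ : ℝ)
    (hz₁ : z₁ = (-1 - 2 * p * q + θ) / (2 * p ^ 2))
    (hz₃ : z₃ = (-1 - 2 * p * q - θ) / (2 * p ^ 2)) :
    (p ^ 2 * z₁ ^ 2 + (1 + 2 * p * q) * z₁ + q ^ 2 = 0) ∧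
    (p ^ 2 * z₃ ^ 2 + (1 + 2 * p * q) * z₃ + q ^ 2 = 0) ∧
    |z₁| < 1 ∧ 1 < |z₃| ∧ -1 < z₁ ∧ z₁ < 0 ∧ z₃ < -1 := by
  have hq : q = 1 - p := by linarith
  subst hq
  have hp2 : p < 1/2 := by linarith
  have hnn : (0:ℝ) ≤ 1 + 4 * p * (1 - p) := by nlinarith
  have hθnn : 0 ≤ θ := hθ ▸ Real.sqrt_nonneg _
  have hθ2 : θ ^ 2 = 1 + 4 * p * (1 - p) := by
    rw [hθ, sq, Real.mul_self_sqrt hnn]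
  have hpq0 : (0:ℝ) < p * (1 - p) := mul_pos hp (by linarith)
  have h1 : θ < 1 + 2 * p * (1 - p) := by nlinarith [hpq0, sq_nonneg (p * (1 - p))]
  have ha : (0:ℝ) < 1 + 2 * p * (1 - p) - 2 * p ^ 2 := by nlinarith
  have h2 : 1 + 2 * p * (1 - p) - 2 * p ^ 2 < θ := by
    nlinarith [mul_pos (mul_pos (mul_pos hp hp) hp) (show (0:ℝ) < 1 - p by linarith), ha, hθnn]
  have hz1neg : z₁ < 0 := by
    rw [hz₁]
    apply div_neg_of_neg_of_pos
    · linarith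
    · positivity
  have hz1gt : -1 < z₁ := by
    rw [hz₁, lt_div_iff₀ (by positivity : (0:ℝ) < 2 * p ^ 2)]
    nlinarith
  have hz3lt : z₃ < -1 := by
    rw [hz₃, div_lt_iff₀ (by positivity : (0:ℝ) < 2 * p ^ 2)]
    nlinarith
  refine ⟨?_, ?_, ?_, ?_, hz1gt, hz1neg, hz3lt⟩
  · rw [hz₁]; field_simp; nlinarith [hθ2]
  · rw [hz₃]; field_simp; nlinarith [hθ2]
  · rw [abs_lt]; constructor <;> linarith
  · rw [lt_abs]; right; linarith
end

section
/- Let 0<p<q, p+q=1, θ=√(1+4pq). With π_0 = (q−p)(3−2p−θ)/(2q⁴), π_1 = (q−p)(−1−p−2pq+(1+p)θ)/q⁵, and L = [2p³(1+q)π_0 − (2(q−p)−q⁴)π_1]/(2(q−p)), the identity π_0 + π_1 + L = 1 holds. -/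
/-- Normalization `π₀ + π₁ + L = 1` for the stationary distribution of the
`ℓ = 2` traffic light subwalk. -/
theorem stmt_8 (p q : ℝ) (hp : 0 < p) (hpq : p < q) (hsum : p + q = 1)
    (θ : ℝ) (hθ : θ = Real.sqrt (1 + 4 * p * q))
    (π₀ π₁ L : ℝ)
    (hπ₀ : π₀ = (q - p) * (3 - 2 * p - θ) / (2 * q ^ 4))
    (hπ₁ : π₁ = (q - p) * (-1 - p - 2 * p * q + (1 + p) * θ) / q ^ 5)
    (hL : L = (2 * p ^ 3 * (1 + q) * π₀ - (2 * (q - p) - q ^ 4) * π₁)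
      / (2 * (q - p))) :
    π₀ + π₁ + L = 1 := by
  have hq : q = 1 - p := by linarith
  have hq0 : q ≠ 0 := by nlinarith
  have hd : q - p ≠ 0 := by nlinarith
  subst hπ₀ hπ₁ hL hq
  field_simp
  ring
end

section
/- Let 0<p<q, p+q=1. The quartic q⁴ + q²(1+4pq)z + (1+2pq+6p²q²)z² + p²(1+4pq)z³ + p⁴z⁴ has exactly two roots of modulus < 1 and two roots of modulus > 1 (the roots come in the complex-conjugate pairs z₁, z̄₁ and z₄, z̄₄ given by z = (−1 ∓ i√3 − 4pq ± √(−2 ± 2i√3 + 8(1±i√3)pq))/(4p²)), and in particular it has no root on the unit circle. -/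
/-!
With `u = pq` and `a = 2u + e^{iπ/3}`, the quartic factors as
`(p²z² + a z + q²)(p²z² + ā z + q²)`, so its roots are those of the first factor and their
conjugates; they are non-real because `a` is non-real while `p², q²` are real.

For a quadratic `c z² + b z + d` with roots `z₁, z₄`, the parallelogram law gives
`|z₁|² + |z₄|² = (|b|² + |b² - 4cd|) / (2|c|²)` and `|z₁ z₄| = |d / c|`, hence
`(|z₁|² - 1)(|z₄|² - 1) < 0`, i.e. one root lies inside and one outside the unit circle, as soon
as `2(|c|² + |d|²) < |b|² + |b² - 4cd|`. For the first factor this reads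
`√(16u² + 4u + 1) > 1 - 10u`, which holds for `0 < u ≤ 1/4`.
-/

open Complex ComplexConjugate

lemma lt_one_lt_or_of_sq_mul_sq_add_one_lt {r s : ℝ} (hr : 0 ≤ r) (hs : 0 ≤ s)
    (h : r ^ 2 * s ^ 2 + 1 < r ^ 2 + s ^ 2) : (r < 1 ∧ 1 < s) ∨ (s < 1 ∧ 1 < r) := by
  have hneg : (r ^ 2 - 1) * (s ^ 2 - 1) < 0 := by linarith
  rcases mul_neg_iff.1 hneg with ⟨hr1, hs1⟩ | ⟨hr1, hs1⟩
  · right; constructor <;> nlinarith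
  · left; constructor <;> nlinarith

lemma norm_add_lt_one_lt_norm_sub_or_of_norm_sq_sub_sq {x y : ℂ}
    (h : ‖x ^ 2 - y ^ 2‖ ^ 2 + 1 < 2 * (‖x‖ ^ 2 + ‖y‖ ^ 2)) :
    (‖x + y‖ < 1 ∧ 1 < ‖x - y‖) ∨ (‖x - y‖ < 1 ∧ 1 < ‖x + y‖) := by
  apply lt_one_lt_or_of_sq_mul_sq_add_one_lt (norm_nonneg _) (norm_nonneg _)
  rwa [← mul_pow, ← norm_mul, parallelogram_law_with_norm ℝ, ← sq_sub_sq]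

theorem exists_roots_norm_lt_one_lt_of_quadratic {c b d : ℂ} (hc : c ≠ 0)
    (h : 2 * (‖c‖ ^ 2 + ‖d‖ ^ 2) < ‖b‖ ^ 2 + ‖discrim c b d‖) :
    ∃ z₁ z₄ : ℂ, ‖z₁‖ < 1 ∧ 1 < ‖z₄‖ ∧
      ∀ z, c * (z * z) + b * z + d = 0 ↔ z = z₁ ∨ z = z₄ := by
  obtain ⟨e, he⟩ := IsAlgClosed.exists_eq_mul_self (discrim c b d)
  set x := -b / (2 * c)
  set y := e / (2 * c)
  have hroots : ∀ z, c * (z * z) + b * z + d = 0 ↔ z = x + y ∨ z = x - y := fun z => by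
    rw [quadratic_eq_zero_iff hc he, add_div, sub_div]
  have hxy : x ^ 2 - y ^ 2 = d / c := by
    rw [discrim] at he
    simp only [x, y]
    field_simp
    linear_combination he
  have hc' : 0 < ‖c‖ := norm_pos_iff.2 hc
  have he' : ‖e‖ ^ 2 = ‖discrim c b d‖ := by rw [he, norm_mul, sq]
  have hsq : ‖x ^ 2 - y ^ 2‖ ^ 2 + 1 < 2 * (‖x‖ ^ 2 + ‖y‖ ^ 2) := by
    rw [hxy]
    simp only [x, y, norm_div, norm_neg, norm_mul, Complex.norm_two, div_pow, mul_pow]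
    rw [← sub_pos]
    field_simp
    linarith
  rcases norm_add_lt_one_lt_norm_sub_or_of_norm_sq_sub_sq hsq with ⟨h₁, h₄⟩ | ⟨h₁, h₄⟩
  · exact ⟨x + y, x - y, h₁, h₄, hroots⟩
  · exact ⟨x - y, x + y, h₁, h₄, fun z => (hroots z).trans or_comm⟩

lemma quadratic_mul_quadratic_conj (c d a z : ℂ) :
    (c * (z * z) + a * z + d) * (c * (z * z) + conj a * z + d) =
      c ^ 2 * z ^ 4 + 2 * c * a.re * z ^ 3 + (2 * c * d + normSq a) * z ^ 2
        + 2 * d * a.re * z + d ^ 2 := by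
  have hre : a + conj a = 2 * a.re := by rw [add_conj]; push_cast; ring
  linear_combination (c * z ^ 3 + d * z) * hre + z ^ 2 * mul_conj a

lemma quadratic_conj_eq_zero_iff (c d : ℝ) (a z : ℂ) :
    c * (z * z) + conj a * z + d = 0 ↔ c * (conj z * conj z) + a * conj z + d = 0 := by
  rw [← map_eq_zero (starRingEnd ℂ)]
  simp

lemma im_ne_zero_of_quadratic_eq_zero {c d : ℝ} {b z : ℂ} (hb : b.im ≠ 0) (hd : d ≠ 0)
    (h : c * (z * z) + b * z + d = 0) : z.im ≠ 0 := by
  intro hz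
  have him := congrArg im h
  have hre := congrArg re h
  simp only [add_im, mul_im, ofReal_re, ofReal_im, hz, zero_mul, mul_zero, add_zero, zero_add,
    zero_im, mul_eq_zero] at him
  exact hd (by simpa [hz, him.resolve_left hb] using hre)

/-- `2u + e^{iπ/3}`: for `u = pq` the quartic is `(p²z² + a z + q²)(p²z² + ā z + q²)`. -/
noncomputable def quarticFactorCoeff (u : ℝ) : ℂ := ⟨2 * u + 1 / 2, √3 / 2⟩

lemma normSq_quarticFactorCoeff (u : ℝ) :
    normSq (quarticFactorCoeff u) = 4 * u ^ 2 + 2 * u + 1 := by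
  have h3 : √3 * √3 = 3 := Real.mul_self_sqrt (by norm_num)
  simp only [quarticFactorCoeff, normSq_apply]
  linear_combination h3 / 4

lemma normSq_discrim_quarticFactorCoeff (p q : ℝ) :
    normSq (discrim ((p : ℂ) ^ 2) (quarticFactorCoeff (p * q)) ((q : ℂ) ^ 2)) =
      16 * (p * q) ^ 2 + 4 * (p * q) + 1 := by
  have h3 : √3 * √3 = 3 := Real.mul_self_sqrt (by norm_num)
  set t := 2 * (p * q) + 1 / 2
  set A := t ^ 2 - 4 * (p * q) ^ 2
  simp only [discrim, quarticFactorCoeff, one_div, pow_two, normSq_apply, sub_re, mul_re,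
    re_ofNat, ofReal_re, ofReal_im, mul_zero, sub_zero, im_ofNat, mul_im, zero_mul, add_zero,
    sub_im]
  linear_combination (t ^ 2 - (2 * A - √3 * √3 / 4 - 3 / 4) / 4) * h3

lemma quartic_eq_mul_quarticFactorCoeff (p q : ℝ) (z : ℂ) :
    (q : ℂ) ^ 4 + (q : ℂ) ^ 2 * (1 + 4 * p * q) * z
      + (1 + 2 * (p : ℂ) * q + 6 * (p : ℂ) ^ 2 * (q : ℂ) ^ 2) * z ^ 2
      + (p : ℂ) ^ 2 * (1 + 4 * (p : ℂ) * q) * z ^ 3 + (p : ℂ) ^ 4 * z ^ 4 =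
    ((p : ℂ) ^ 2 * (z * z) + quarticFactorCoeff (p * q) * z + (q : ℂ) ^ 2) *
      ((p : ℂ) ^ 2 * (z * z) + conj (quarticFactorCoeff (p * q)) * z + (q : ℂ) ^ 2) := by
  rw [quadratic_mul_quadratic_conj, normSq_quarticFactorCoeff]
  simp only [quarticFactorCoeff]
  push_cast
  ring

lemma two_mul_norm_sq_add_lt_norm_sq_add_norm_discrim {p q : ℝ} (hp : 0 < p) (hq : 0 < q)
    (hsum : p + q = 1) :
    2 * (‖(p : ℂ) ^ 2‖ ^ 2 + ‖(q : ℂ) ^ 2‖ ^ 2) <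
      ‖quarticFactorCoeff (p * q)‖ ^ 2
        + ‖discrim ((p : ℂ) ^ 2) (quarticFactorCoeff (p * q)) ((q : ℂ) ^ 2)‖ := by
  set N := ‖discrim ((p : ℂ) ^ 2) (quarticFactorCoeff (p * q)) ((q : ℂ) ^ 2)‖
  have hu : 0 < p * q := mul_pos hp hq
  have hu4 : p * q ≤ 1 / 4 := by nlinarith [sq_nonneg (p - q)]
  have hpq4 : p ^ 4 + q ^ 4 = 1 - 4 * (p * q) + 2 * (p * q) ^ 2 := by
    linear_combination ((p + q + 1) * ((p + q) ^ 2 + 1 - 4 * p * q)) * hsum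
  have hN : N ^ 2 = 16 * (p * q) ^ 2 + 4 * (p * q) + 1 := by
    rw [Complex.sq_norm, normSq_discrim_quarticFactorCoeff]
  have hN0 : 0 ≤ N := norm_nonneg _
  have hN' : 1 - 10 * (p * q) < N := by nlinarith
  rw [Complex.sq_norm (quarticFactorCoeff _), normSq_quarticFactorCoeff, norm_pow, norm_pow,
    norm_real, norm_real, Real.norm_of_nonneg hp.le, Real.norm_of_nonneg hq.le]
  nlinarith

/-- The quartic `q⁴ + q²(1+4pq)z + (1+2pq+6p²q²)z² + p²(1+4pq)z³ + p⁴z⁴`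
has its four roots in two complex-conjugate pairs, one pair of modulus `< 1`
and one pair of modulus `> 1`; in particular it has no root on the unit
circle. -/
theorem stmt_13 (p q : ℝ) (hp : 0 < p) (hpq : p < q) (hsum : p + q = 1)
    (Q : ℂ → ℂ)
    (hQ : ∀ z, Q z = (q : ℂ) ^ 4 + (q : ℂ) ^ 2 * (1 + 4 * p * q) * z
      + (1 + 2 * (p : ℂ) * q + 6 * (p : ℂ) ^ 2 * (q : ℂ) ^ 2) * z ^ 2
      + (p : ℂ) ^ 2 * (1 + 4 * (p : ℂ) * q) * z ^ 3 + (p : ℂ) ^ 4 * z ^ 4) :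
    (∃ z₁ z₄ : ℂ, z₁.im ≠ 0 ∧ z₄.im ≠ 0 ∧ ‖z₁‖ < 1 ∧ 1 < ‖z₄‖ ∧
      ∀ z : ℂ, Q z = 0 ↔
        z = z₁ ∨ z = (starRingEnd ℂ) z₁ ∨ z = z₄ ∨ z = (starRingEnd ℂ) z₄) ∧
    ∀ z : ℂ, ‖z‖ = 1 → Q z ≠ 0 := by
  have hq : 0 < q := hp.trans hpq
  set a := quarticFactorCoeff (p * q)
  obtain ⟨z₁, z₄, h₁, h₄, hroots⟩ := exists_roots_norm_lt_one_lt_of_quadratic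
    (pow_ne_zero 2 (ofReal_ne_zero.2 hp.ne'))
    (two_mul_norm_sq_add_lt_norm_sq_add_norm_discrim hp hq hsum)
  have hfactor := fun z => (hQ z).trans (quartic_eq_mul_quarticFactorCoeff p q z)
  have hQroots : ∀ z, Q z = 0 ↔ z = z₁ ∨ z = conj z₁ ∨ z = z₄ ∨ z = conj z₄ := fun z => by
    have hconj := quadratic_conj_eq_zero_iff (p ^ 2) (q ^ 2) a z
    push_cast at hconj
    have hconj_eq : ∀ w, conj z = w ↔ z = conj w := fun w => by
      constructor <;> rintro rfl <;> simp
    rw [hfactor, mul_eq_zero, hconj, hroots, hroots, hconj_eq, hconj_eq]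
    tauto
  have him : ∀ z, (p : ℂ) ^ 2 * (z * z) + a * z + (q : ℂ) ^ 2 = 0 → z.im ≠ 0 := fun z => by
    have := im_ne_zero_of_quadratic_eq_zero (c := p ^ 2) (d := q ^ 2) (b := a) (z := z)
      (by simp [a, quarticFactorCoeff]) (by positivity)
    push_cast at this
    exact this
  refine ⟨⟨z₁, z₄, him _ ((hroots _).2 (.inl rfl)), him _ ((hroots _).2 (.inr rfl)), h₁, h₄,
    hQroots⟩, fun z hz hQz => ?_⟩
  have : ‖z‖ = ‖z₁‖ ∨ ‖z‖ = ‖z₄‖ := by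
    rcases (hQroots z).1 hQz with rfl | rfl | rfl | rfl <;> simp
  rcases this with h | h <;> linarith
end

section
/- Let 0<p<q, p+q=1, and θ=√(1+4pq+16p²q²). With u = 1−2p+6p²−8p³+4p⁴ and v = 1+6p²−28p³+54p⁴−48p⁵+16p⁶, the quantity v + uθ is nonnegative, so that A(p) = [(q−p)u + (q−p)³θ + √2(q−p)²√(v+uθ)]/(12q⁶) is well-defined and positive. -/
/-- For the `ℓ = 3` traffic light subwalk, `v + uθ ≥ 0`, so the tail
coefficient `A(p)` is well-defined, and `A(p) > 0`. -/
theorem stmt_14 (p q : ℝ) (hp : 0 < p) (hpq : p < q) (hsum : p + q = 1)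
    (θ u v A : ℝ)
    (hθ : θ = Real.sqrt (1 + 4 * p * q + 16 * p ^ 2 * q ^ 2))
    (hu : u = 1 - 2 * p + 6 * p ^ 2 - 8 * p ^ 3 + 4 * p ^ 4)
    (hv : v = 1 + 6 * p ^ 2 - 28 * p ^ 3 + 54 * p ^ 4 - 48 * p ^ 5
      + 16 * p ^ 6)
    (hA : A = ((q - p) * u + (q - p) ^ 3 * θ
      + Real.sqrt 2 * (q - p) ^ 2 * Real.sqrt (v + u * θ)) / (12 * q ^ 6)) :
    0 ≤ v + u * θ ∧ 0 < A := by
  have hp2 : p < 1/2 := by linarith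
  have hq : 0 < q := by linarith
  have hθ0 : 0 ≤ θ := hθ ▸ Real.sqrt_nonneg _
  have hu0 : 0 < u := by rw [hu]; nlinarith [sq_nonneg p, sq_nonneg (1 - 2*p), sq_nonneg (p - p^2)]
  have hv0 : 0 ≤ v := by rw [hv]; nlinarith [sq_nonneg p, sq_nonneg (1 - 2*p), sq_nonneg (p - p^2), sq_nonneg (p^2 - p^3), sq_nonneg (p^3)]
  have hvu : 0 ≤ v + u * θ := by positivity
  refine ⟨hvu, ?_⟩
  rw [hA]
  apply div_pos _ (by positivity)
  have h1 : 0 < (q - p) * u := by nlinarith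
  have h2 : 0 ≤ (q - p) ^ 3 * θ := mul_nonneg (pow_nonneg (by linarith) 3) hθ0
  have h3 : 0 ≤ Real.sqrt 2 * (q - p) ^ 2 * Real.sqrt (v + u * θ) := by positivity
  linarith
end

section
/- Let 0<p<q, p+q=1, θ=√(1+4pq+16p²q²), u = 1−2p+6p²−8p³+4p⁴, v = 1+6p²−28p³+54p⁴−48p⁵+16p⁶. Then [(q−p)u + (q−p)³θ + √2(q−p)²√(v+uθ)]² / (288pq⁹) equals ((q−p)²/(72pq⁹))·[α + (q−p)²βθ + (q−p)√2·√(γ+αβθ)], where α = 1−4p+10p²−52p³+226p⁴−520p⁵+640p⁶−400p⁷+100p⁸, β = u, and γ = 1−4p+16p²−104p³+506p⁴−1808p⁵+5604p⁶−15576p⁷+35574p⁸−61160p⁹+75152p^{10}−63440p^{11}+34840p^{12}−11200p^{13}+1600p^{14}. -/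
/-- The `ℓ = 3` exponential coefficient `ε₁ = χ₃(p)/6` is a perfect square
divided by `288pq⁹`. -/
theorem stmt_15 (p q : ℝ) (hp : 0 < p) (hpq : p < q) (hsum : p + q = 1)
    (θ u v α γ : ℝ)
    (hθ : θ = Real.sqrt (1 + 4 * p * q + 16 * p ^ 2 * q ^ 2))
    (hu : u = 1 - 2 * p + 6 * p ^ 2 - 8 * p ^ 3 + 4 * p ^ 4)
    (hv : v = 1 + 6 * p ^ 2 - 28 * p ^ 3 + 54 * p ^ 4 - 48 * p ^ 5
      + 16 * p ^ 6)
    (hα : α = 1 - 4 * p + 10 * p ^ 2 - 52 * p ^ 3 + 226 * p ^ 4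
      - 520 * p ^ 5 + 640 * p ^ 6 - 400 * p ^ 7 + 100 * p ^ 8)
    (hγ : γ = 1 - 4 * p + 16 * p ^ 2 - 104 * p ^ 3 + 506 * p ^ 4
      - 1808 * p ^ 5 + 5604 * p ^ 6 - 15576 * p ^ 7 + 35574 * p ^ 8
      - 61160 * p ^ 9 + 75152 * p ^ 10 - 63440 * p ^ 11 + 34840 * p ^ 12
      - 11200 * p ^ 13 + 1600 * p ^ 14) :
    ((q - p) * u + (q - p) ^ 3 * θ
        + Real.sqrt 2 * (q - p) ^ 2 * Real.sqrt (v + u * θ)) ^ 2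
      / (288 * p * q ^ 9)
    = (q - p) ^ 2 / (72 * p * q ^ 9)
      * (α + (q - p) ^ 2 * u * θ
        + (q - p) * Real.sqrt 2 * Real.sqrt (γ + α * u * θ)) := by
  have hq1 : q = 1 - p := by linarith
  subst hq1
  have hp1 : p < 1 / 2 := by linarith
  have h1p : 0 < 1 - p := by linarith
  set d : ℝ := 1 - p - p with hdd
  set T : ℝ := 1 + 4 * p * (1 - p) + 16 * p ^ 2 * (1 - p) ^ 2 with hTdef
  have hT0 : 0 < T := by rw [hTdef]; nlinarith [mul_pos hp h1p, sq_nonneg (p * (1 - p))]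
  have hth2 : θ ^ 2 = T := by rw [hθ]; exact Real.sq_sqrt hT0.le
  have hth0 : 0 ≤ θ := hθ ▸ Real.sqrt_nonneg _
  have hu0 : 0 < u := by
    rw [hu]; nlinarith [sq_nonneg (1 - 2 * p + 2 * p ^ 2), mul_pos hp h1p]
  have hv0 : 0 < v := by
    rw [hv]; nlinarith [mul_pos hp h1p, sq_nonneg (1 - 2 * p), sq_nonneg p, sq_nonneg (p ^ 2), sq_nonneg (p ^ 3), mul_pos (mul_pos hp hp) hp]
  have hvu : 0 ≤ v + u * θ := add_nonneg hv0.le (mul_nonneg hu0.le hth0)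
  set S : ℝ := Real.sqrt (v + u * θ) with hSdef
  have hS0 : 0 ≤ S := Real.sqrt_nonneg _
  have hS2 : S ^ 2 = v + u * θ := Real.sq_sqrt hvu
  have hR2 : Real.sqrt 2 ^ 2 = 2 := Real.sq_sqrt (by norm_num)
  have hd0 : 0 < d := by rw [hdd]; linarith
  have hA : u ^ 2 + d ^ 4 * T + 2 * d ^ 2 * v = 4 * α := by
    rw [hu, hv, hα, hdd, hTdef]; ring
  have hB0 : u ^ 2 * v + (2 * d ^ 2 * u ^ 2 + d ^ 4 * v) * T = 4 * γ := by
    rw [hu, hv, hγ, hdd, hTdef]; ring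
  have hB1 : u ^ 3 + 2 * d ^ 2 * u * v + d ^ 4 * u * T = 4 * α * u := by
    linear_combination u * hA
  have hwsq : γ + α * u * θ = ((u + d ^ 2 * θ) * S / 2) ^ 2 := by
    linear_combination (-1 / 4) * hB0 - (θ / 4) * hB1
      - ((u + d ^ 2 * θ) ^ 2 / 4) * hS2
      - ((2 * d ^ 2 * u ^ 2 + d ^ 4 * v + d ^ 4 * u * θ) / 4) * hth2
  have hwnn : 0 ≤ (u + d ^ 2 * θ) * S / 2 := by
    have h1 : 0 ≤ u + d ^ 2 * θ := by positivity
    positivity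
  have hsg : Real.sqrt (γ + α * u * θ) = (u + d ^ 2 * θ) * S / 2 := by
    rw [hwsq, Real.sqrt_sq hwnn]
  rw [hsg]
  have key : (d * u + d ^ 3 * θ + Real.sqrt 2 * d ^ 2 * S) ^ 2
      = 4 * (d ^ 2 * (α + d ^ 2 * u * θ + d * Real.sqrt 2 * ((u + d ^ 2 * θ) * S / 2))) := by
    linear_combination (d ^ 4 * S ^ 2) * hR2 + (2 * d ^ 4) * hS2 + (d ^ 6) * hth2 + (d ^ 2) * hA
  rw [key]
  have hpn : p ≠ 0 := hp.ne'
  have h1pn : (1 - p) ≠ 0 := h1p.ne'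
  field_simp
  ring
end

section
/- Let 0<p<q, p+q=1, θ=√(1+4pq). Given π_0 = (q−p)(3−2p−θ)/(2q⁴) and π_1 = (q−p)(−1−p−2pq+(1+p)θ)/q⁵, define N(z) = {p³(4−3p+pz)π_0 + [−1+6p²−8p³+3p⁴+(4−3p)p³z+p⁴z²]π_1}z² and D(z) = (q²−p²z)(q²+(1+2pq)z+p²z²). Then with z₂ = q²/p², the formula A(p) = −N(z₂)/(z₂D′(z₂)) evaluates to (q−p)[1+(q−p)θ]/(4q⁴). -/
/-! At the simple pole `z₂` of `D` only the linear factor `q² − p²z` vanishes, so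
`D′(z₂) = −p²·(q² + (1+2pq)z₂ + p²z₂²)`, and with `p + q = 1` this gives
`z₂·D′(z₂) = −2q⁴/p²`. Evaluating `N(z₂)` is then a rational identity. -/

theorem HasDerivAt.mul_of_eq_zero {𝕜 : Type*} [NontriviallyNormedField 𝕜] {f g : 𝕜 → 𝕜}
    {f' x : 𝕜} (hf : HasDerivAt f f' x) (hg : DifferentiableAt 𝕜 g x) (hfx : f x = 0) :
    HasDerivAt (fun y => f y * g y) (f' * g x) x := by
  convert! hf.mul hg.hasDerivAt using 1
  rw [hfx, zero_mul, add_zero]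

theorem stmt_18_general (p q : ℝ) (hp : 0 < p) (hpq : p < q) (hsum : p + q = 1)
    (θ : ℝ)
    (π₀ π₁ : ℝ)
    (hπ₀ : π₀ = (q - p) * (3 - 2 * p - θ) / (2 * q ^ 4))
    (hπ₁ : π₁ = (q - p) * (-1 - p - 2 * p * q + (1 + p) * θ) / q ^ 5)
    (N D : ℝ → ℝ)
    (hN : ∀ z, N z = (p ^ 3 * (4 - 3 * p + p * z) * π₀
      + (-1 + 6 * p ^ 2 - 8 * p ^ 3 + 3 * p ^ 4 + (4 - 3 * p) * p ^ 3 * z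
        + p ^ 4 * z ^ 2) * π₁) * z ^ 2)
    (hD : ∀ z, D z = (q ^ 2 - p ^ 2 * z)
      * (q ^ 2 + (1 + 2 * p * q) * z + p ^ 2 * z ^ 2))
    (z₂ : ℝ) (hz₂ : z₂ = q ^ 2 / p ^ 2) :
    -N z₂ / (z₂ * deriv D z₂) = (q - p) * (1 + (q - p) * θ) / (4 * q ^ 4) := by
  have hp0 : p ≠ 0 := hp.ne'
  have hq0 : q ≠ 0 := (hp.trans hpq).ne'
  have hroot : q ^ 2 - p ^ 2 * z₂ = 0 := by
    rw [hz₂]; field_simp; ring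
  have hD' : deriv D z₂ = -p ^ 2 * (q ^ 2 + (1 + 2 * p * q) * z₂ + p ^ 2 * z₂ ^ 2) := by
    rw [funext hD]
    have hlin : HasDerivAt (fun z => q ^ 2 - p ^ 2 * z) (-p ^ 2) z₂ := by
      simpa using ((hasDerivAt_id z₂).const_mul (p ^ 2)).const_sub (q ^ 2)
    exact (hlin.mul_of_eq_zero (by fun_prop) hroot).deriv
  obtain rfl : q = 1 - p := by linarith
  have hden : z₂ * deriv D z₂ = -2 * (1 - p) ^ 4 / p ^ 2 := by
    rw [hD', hz₂]; field_simp; ring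
  have hnum : N z₂ = (1 - 2 * p) * (1 + (1 - 2 * p) * θ) / (2 * p ^ 2) := by
    rw [hN, hz₂, hπ₀, hπ₁]; field_simp; ring
  rw [hden, hnum]
  field_simp
  ring

/-- Singularity analysis for the `ℓ = 2` traffic light subwalk: with
`N`, `D` the numerator and denominator of the stationary generating function
and `z₂ = q²/p²` the dominant singularity, the coefficient
`A(p) = −N(z₂)/(z₂·D′(z₂))` equals `(q−p)[1+(q−p)θ]/(4q⁴)`. -/
theorem stmt_18 (p q : ℝ) (hp : 0 < p) (hpq : p < q) (hsum : p + q = 1)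
    (θ : ℝ) (hθ : θ = Real.sqrt (1 + 4 * p * q))
    (π₀ π₁ : ℝ)
    (hπ₀ : π₀ = (q - p) * (3 - 2 * p - θ) / (2 * q ^ 4))
    (hπ₁ : π₁ = (q - p) * (-1 - p - 2 * p * q + (1 + p) * θ) / q ^ 5)
    (N D : ℝ → ℝ)
    (hN : ∀ z, N z = (p ^ 3 * (4 - 3 * p + p * z) * π₀
      + (-1 + 6 * p ^ 2 - 8 * p ^ 3 + 3 * p ^ 4 + (4 - 3 * p) * p ^ 3 * z
        + p ^ 4 * z ^ 2) * π₁) * z ^ 2)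
    (hD : ∀ z, D z = (q ^ 2 - p ^ 2 * z)
      * (q ^ 2 + (1 + 2 * p * q) * z + p ^ 2 * z ^ 2))
    (z₂ : ℝ) (hz₂ : z₂ = q ^ 2 / p ^ 2) :
    -N z₂ / (z₂ * deriv D z₂) = (q - p) * (1 + (q - p) * θ) / (4 * q ^ 4) :=
  stmt_18_general p q hp hpq hsum θ π₀ π₁ hπ₀ hπ₁ N D hN hD z₂ hz₂
end
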